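/- If a Markov kernel K on a countable space is reversible with respect to a probability mass function f and f(θ) > 0 for all θ, then f is the unique stationary distribution of K provided K is irreducible: any probability mass function g with ∑_θ g(θ)K(θ,θ') = g(θ') for all θ' must equal f. -/
import Mathlib


/-- The n-step transition kernel of a Markov kernel on a countable space. -/
noncomputable def kiter {Θ : Type*} [DecidableEq Θ] (K : Θ → Θ → ℝ) :
    ℕ → Θ → Θ → ℝ
  | 0 => fun x y => if x = y then 1 else 0
  | (n + 1) => fun x y => ∑' z, kiter K n x z * K z y

section Aux

variable {Θ : Type*} [Countable Θ] [DecidableEq Θ]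

lemma summable_of_tsum_ne_zero {f : Θ → ℝ} (h : ∑' θ, f θ ≠ 0) : Summable f := by
  by_contra hs
  exact h (tsum_eq_zero_of_not_summable hs)

/-- Fubini for nonnegative real-valued double families. -/
lemma fubini_nonneg {u : Θ → Θ → ℝ} (h0 : ∀ a b, 0 ≤ u a b)
    (hs : ∀ a, Summable (u a)) (hrow : Summable fun a => ∑' b, u a b) :
    (Summable fun b => ∑' a, u a b) ∧ (∀ b, Summable fun a => u a b) ∧
      (∑' b, ∑' a, u a b) = ∑' a, ∑' b, u a b := by
  have hunc : Summable (Function.uncurry u) := by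
    exact (summable_prod_of_nonneg (f := Function.uncurry u)
      (fun p => h0 p.1 p.2)).mpr ⟨hs, hrow⟩
  refine ⟨hunc.prod_symm.prod, fun b => hunc.prod_symm.prod_factor b, ?_⟩
  exact Summable.tsum_comm hunc

lemma kiter_nonneg {K : Θ → Θ → ℝ} (hK0 : ∀ θ θ', 0 ≤ K θ θ') :
    ∀ n a b, 0 ≤ kiter K n a b := by
  intro n
  induction n with
  | zero => intro a b; simp only [kiter]; split <;> norm_num
  | succ n ih =>
    intro a b
    simp only [kiter]
    exact tsum_nonneg fun z => mul_nonneg (ih a z) (hK0 z b)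

lemma kiter_sum {K : Θ → Θ → ℝ} (hK0 : ∀ θ θ', 0 ≤ K θ θ')
    (hK1 : ∀ θ, ∑' θ', K θ θ' = 1) :
    ∀ n a, Summable (kiter K n a) ∧ ∑' b, kiter K n a b = 1 := by
  have hKs : ∀ a, Summable (K a) := fun a => summable_of_tsum_ne_zero (by rw [hK1 a]; norm_num)
  intro n
  induction n with
  | zero =>
    intro a
    have he : (kiter K 0 a) = fun b => if b = a then (1:ℝ) else 0 := by
      funext b; simp only [kiter]; simp [eq_comm]
    rw [he]
    exact ⟨(hasSum_ite_eq a (1:ℝ)).summable, (hasSum_ite_eq a (1:ℝ)).tsum_eq⟩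
  | succ n ih =>
    intro a
    have hrow : (fun z => ∑' b, kiter K n a z * K z b) = kiter K n a := by
      funext z
      rw [tsum_mul_left, hK1 z, mul_one]
    have hfub := fubini_nonneg (u := fun z b => kiter K n a z * K z b)
      (fun z b => mul_nonneg (kiter_nonneg hK0 n a z) (hK0 z b))
      (fun z => (hKs z).mul_left _) (by rw [hrow]; exact (ih a).1)
    constructor
    · exact hfub.1
    · show (∑' b, ∑' z, kiter K n a z * K z b) = 1
      rw [hfub.2.2, hrow, (ih a).2]

lemma kiter_le_one {K : Θ → Θ → ℝ} (hK0 : ∀ θ θ', 0 ≤ K θ θ')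
    (hK1 : ∀ θ, ∑' θ', K θ θ' = 1) (n : ℕ) (a b : Θ) : kiter K n a b ≤ 1 := by
  have := Summable.le_tsum (kiter_sum hK0 hK1 n a).1 b (fun j _ => kiter_nonneg hK0 n a j)
  rwa [(kiter_sum hK0 hK1 n a).2] at this

/-- A nonnegative summable stationary function is stationary for all iterates. -/
lemma stat_iter {K : Θ → Θ → ℝ} {p : Θ → ℝ} (hK0 : ∀ θ θ', 0 ≤ K θ θ')
    (hK1 : ∀ θ, ∑' θ', K θ θ' = 1) (hp0 : ∀ θ, 0 ≤ p θ) (hps : Summable p)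
    (hstat : ∀ b, ∑' a, p a * K a b = p b) :
    ∀ n b, ∑' a, p a * kiter K n a b = p b := by
  have hkn := kiter_nonneg hK0
  have hkle := kiter_le_one hK0 hK1
  have hks := fun n a => (kiter_sum hK0 hK1 n a).1
  intro n
  induction n with
  | zero =>
    intro b
    have he : (fun a => p a * kiter K 0 a b) = fun a => if a = b then p b else 0 := by
      funext a
      simp only [kiter]
      by_cases h : a = b <;> simp [h]
    rw [he]
    exact (hasSum_ite_eq b (p b)).tsum_eq
  | succ n ih =>
    intro b
    -- the double family
    set u : Θ → Θ → ℝ := fun a z => p a * kiter K n a z * K z b with hu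
    have hu0 : ∀ a z, 0 ≤ u a z := fun a z =>
      mul_nonneg (mul_nonneg (hp0 a) (hkn n a z)) (hK0 z b)
    have hsrow : ∀ a, Summable (u a) := by
      intro a
      apply Summable.of_nonneg_of_le (fun z => hu0 a z) (f := fun z => p a * kiter K n a z)
      · intro z
        calc p a * kiter K n a z * K z b ≤ p a * kiter K n a z * 1 := by
              apply mul_le_mul_of_nonneg_left _ (mul_nonneg (hp0 a) (hkn n a z))
              calc K z b ≤ ∑' b', K z b' :=
                    Summable.le_tsum (summable_of_tsum_ne_zero (by rw [hK1 z]; norm_num)) b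
                      (fun j _ => hK0 z j)
                _ = 1 := hK1 z
          _ = p a * kiter K n a z := by ring
      · exact (hks n a).mul_left _
    have hrowbound : ∀ a, ∑' z, u a z ≤ p a := by
      intro a
      calc ∑' z, u a z ≤ ∑' z, p a * kiter K n a z := by
            apply Summable.tsum_le_tsum _ (hsrow a) ((hks n a).mul_left _)
            intro z
            calc u a z ≤ p a * kiter K n a z * 1 := by
                  apply mul_le_mul_of_nonneg_left _ (mul_nonneg (hp0 a) (hkn n a z))
                  calc K z b ≤ ∑' b', K z b' :=
                        Summable.le_tsum (summable_of_tsum_ne_zero (by rw [hK1 z]; norm_num)) b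
                          (fun j _ => hK0 z j)
                    _ = 1 := hK1 z
              _ = p a * kiter K n a z := by ring
        _ = p a * ∑' z, kiter K n a z := tsum_mul_left
        _ = p a := by rw [(kiter_sum hK0 hK1 n a).2, mul_one]
    have hrows : Summable fun a => ∑' z, u a z :=
      Summable.of_nonneg_of_le (fun a => tsum_nonneg (hu0 a)) hrowbound hps
    have hfub := fubini_nonneg hu0 hsrow hrows
    have hL : (fun a => p a * kiter K (n+1) a b) = fun a => ∑' z, u a z := by
      funext a
      show p a * (∑' z, kiter K n a z * K z b) = _
      rw [← tsum_mul_left]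
      congr 1
      funext z
      exact (mul_assoc (p a) (kiter K n a z) (K z b)).symm
    rw [hL, ← hfub.2.2]
    have hinner : ∀ z, (∑' a, u a z) = p z * K z b := by
      intro z
      have : (fun a => u a z) = fun a => (p a * kiter K n a z) * K z b := rfl
      rw [this, tsum_mul_right, ih z]
    calc (∑' z, ∑' a, u a z) = ∑' z, p z * K z b := by
          congr 1; funext z; exact hinner z
      _ = p b := hstat b

end Aux

/-- If K is irreducible and reversible w.r.t. a strictly positive pmf f, then
f is the unique stationary distribution: any stationary pmf g equals f. -/
theorem phs_stmt_12 {Θ : Type*} [Countable Θ] [DecidableEq Θ]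
    (f g : Θ → ℝ) (K : Θ → Θ → ℝ)
    (hf0 : ∀ θ, 0 < f θ) (hf1 : ∑' θ, f θ = 1)
    (hg0 : ∀ θ, 0 ≤ g θ) (hg1 : ∑' θ, g θ = 1)
    (hK0 : ∀ θ θ', 0 ≤ K θ θ') (hK1 : ∀ θ, ∑' θ', K θ θ' = 1)
    (hirr : ∀ θ θ', ∃ n, 0 < kiter K n θ θ')
    (hDB : ∀ θ θ', f θ * K θ θ' = f θ' * K θ' θ)
    (hstat : ∀ θ', ∑' θ, g θ * K θ θ' = g θ') :
    g = f := by
  have hfs : Summable f := summable_of_tsum_ne_zero (by rw [hf1]; norm_num)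
  have hgs : Summable g := summable_of_tsum_ne_zero (by rw [hg1]; norm_num)
  have hkn := kiter_nonneg hK0
  have hkle := kiter_le_one hK0 hK1
  have hks := fun n a => (kiter_sum hK0 hK1 n a).1
  have hksum := fun n a => (kiter_sum hK0 hK1 n a).2
  -- f is stationary
  have hfstat : ∀ b, ∑' a, f a * K a b = f b := by
    intro b
    have : (fun a => f a * K a b) = fun a => f b * K b a := by
      funext a; have := hDB a b; linarith
    rw [this, tsum_mul_left, hK1 b, mul_one]
  have hfiter := stat_iter hK0 hK1 (fun θ => (hf0 θ).le) hfs hfstat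
  have hgiter := stat_iter hK0 hK1 hg0 hgs hstat
  -- define h = g - f
  set h : Θ → ℝ := fun θ => g θ - f θ with hh
  have hhs : Summable h := hgs.sub hfs
  have hhabs : Summable fun θ => |h θ| := hhs.abs
  have hhsum0 : ∑' θ, h θ = 0 := by
    rw [hh, Summable.tsum_sub hgs hfs, hg1, hf1]; ring
  -- summabilities of h against kernels
  have hhk_s : ∀ n b, Summable fun a => |h a| * kiter K n a b := by
    intro n b
    apply Summable.of_nonneg_of_le
      (fun a => mul_nonneg (abs_nonneg _) (hkn n a b)) _ hhabs
    intro a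
    calc |h a| * kiter K n a b ≤ |h a| * 1 :=
          mul_le_mul_of_nonneg_left (hkle n a b) (abs_nonneg _)
      _ = |h a| := mul_one _
  have hhk_s' : ∀ n b, Summable fun a => h a * kiter K n a b := by
    intro n b
    apply Summable.of_abs
    have : (fun a => |h a * kiter K n a b|) = fun a => |h a| * kiter K n a b := by
      funext a; rw [abs_mul, abs_of_nonneg (hkn n a b)]
    rw [this]; exact hhk_s n b
  -- h is stationary for all iterates
  have hhiter : ∀ n b, ∑' a, h a * kiter K n a b = h b := by
    intro n b
    have hsg : Summable fun a => g a * kiter K n a b := by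
      apply Summable.of_nonneg_of_le (fun a => mul_nonneg (hg0 a) (hkn n a b)) _ hgs
      intro a
      calc g a * kiter K n a b ≤ g a * 1 :=
            mul_le_mul_of_nonneg_left (hkle n a b) (hg0 a)
        _ = g a := mul_one _
    have hsf : Summable fun a => f a * kiter K n a b := by
      apply Summable.of_nonneg_of_le (fun a => mul_nonneg (hf0 a).le (hkn n a b)) _ hfs
      intro a
      calc f a * kiter K n a b ≤ f a * 1 :=
            mul_le_mul_of_nonneg_left (hkle n a b) (hf0 a).le
        _ = f a := mul_one _
    have : (fun a => h a * kiter K n a b)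
        = fun a => g a * kiter K n a b - f a * kiter K n a b := by
      funext a; rw [hh]; ring
    rw [this, Summable.tsum_sub hsg hsf, hgiter n b, hfiter n b]
  -- pointwise triangle inequality
  have htri : ∀ n b, |h b| ≤ ∑' a, |h a| * kiter K n a b := by
    intro n b
    rw [← hhiter n b]
    have hsabs : Summable fun a => ‖h a * kiter K n a b‖ := by
      have : (fun a => ‖h a * kiter K n a b‖) = fun a => |h a| * kiter K n a b := by
        funext a
        rw [Real.norm_eq_abs, abs_mul, abs_of_nonneg (hkn n a b)]
      rw [this]; exact hhk_s n b
    have h1 := norm_tsum_le_tsum_norm hsabs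
    calc |∑' a, h a * kiter K n a b| = ‖∑' a, h a * kiter K n a b‖ :=
          (Real.norm_eq_abs _).symm
      _ ≤ ∑' a, ‖h a * kiter K n a b‖ := h1
      _ = ∑' a, |h a| * kiter K n a b := by
          congr 1; funext a
          rw [Real.norm_eq_abs, abs_mul, abs_of_nonneg (hkn n a b)]
  -- Fubini for |h| against kiter n
  have hfubn : ∀ n, (Summable fun b => ∑' a, |h a| * kiter K n a b) ∧
      (∑' b, ∑' a, |h a| * kiter K n a b) = ∑' a, |h a| := by
    intro n
    have hrow : (fun a => ∑' b, |h a| * kiter K n a b) = fun a => |h a| := by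
      funext a; rw [tsum_mul_left, hksum n a, mul_one]
    have hfub := fubini_nonneg (u := fun a b => |h a| * kiter K n a b)
      (fun a b => mul_nonneg (abs_nonneg _) (hkn n a b))
      (fun a => (hks n a).mul_left _) (by rw [hrow]; exact hhabs)
    exact ⟨hfub.1, by rw [hfub.2.2, hrow]⟩
  -- equality everywhere
  have heq : ∀ n b, ∑' a, |h a| * kiter K n a b = |h b| := by
    intro n b
    set A : Θ → ℝ := fun b => (∑' a, |h a| * kiter K n a b) - |h b| with hA
    have hA0 : ∀ b, 0 ≤ A b := fun b => sub_nonneg.2 (htri n b)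
    have hAs : Summable A := ((hfubn n).1).sub hhabs
    have hAsum : ∑' b, A b = 0 := by
      rw [hA, Summable.tsum_sub (hfubn n).1 hhabs, (hfubn n).2]; ring
    have : A b ≤ 0 := by
      have := Summable.le_tsum hAs b (fun j _ => hA0 j)
      rwa [hAsum] at this
    have h2 : (∑' a, |h a| * kiter K n a b) - |h b| = 0 := le_antisymm this (hA0 b)
    linarith
  -- main contradiction
  by_contra hne
  have hex : ∃ θ, h θ ≠ 0 := by
    by_contra hall
    push_neg at hall
    apply hne
    funext θ
    have := hall θ
    rw [hh] at this
    linarith [sub_eq_zero.mp this]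
  obtain ⟨θ₀, hθ₀⟩ := hex
  have hpos : ∃ a, 0 < h a := by
    by_contra hnp
    push_neg at hnp
    have h1 : ∀ a, 0 ≤ -h a := fun a => by linarith [hnp a]
    have h2 : ∑' a, -h a = 0 := by rw [tsum_neg, hhsum0]; ring
    have := Summable.le_tsum hhs.neg θ₀ (fun j _ => h1 j)
    rw [h2] at this
    have : h θ₀ = 0 := le_antisymm (hnp θ₀) (by linarith)
    exact hθ₀ this
  have hneg : ∃ a, h a < 0 := by
    by_contra hnn
    push_neg at hnn
    have := Summable.le_tsum hhs θ₀ (fun j _ => hnn j)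
    rw [hhsum0] at this
    have : h θ₀ = 0 := le_antisymm this (hnn θ₀)
    exact hθ₀ this
  obtain ⟨θp, hθp⟩ := hpos
  obtain ⟨θm, hθm⟩ := hneg
  obtain ⟨n, hn⟩ := hirr θp θm
  -- consider w a = (|h a| + h a) * kiter n a θm
  set w : Θ → ℝ := fun a => (|h a| + h a) * kiter K n a θm with hw
  have hw0 : ∀ a, 0 ≤ w a := fun a =>
    mul_nonneg (by cases abs_cases (h a) with
      | inl hc => linarith [hc.1]
      | inr hc => linarith [hc.1]) (hkn n a θm)
  have hws : Summable w := by
    have : w = fun a => |h a| * kiter K n a θm + h a * kiter K n a θm := by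
      funext a; rw [hw]; ring
    rw [this]
    exact (hhk_s n θm).add (hhk_s' n θm)
  have hwsum : ∑' a, w a = 0 := by
    have : w = fun a => |h a| * kiter K n a θm + h a * kiter K n a θm := by
      funext a; rw [hw]; ring
    rw [this, Summable.tsum_add (hhk_s n θm) (hhk_s' n θm), heq n θm, hhiter n θm,
      abs_of_neg hθm]
    ring
  have hle := Summable.le_tsum hws θp (fun j _ => hw0 j)
  rw [hwsum] at hle
  have : 0 < w θp := by
    show 0 < (|h θp| + h θp) * kiter K n θp θm
    have : |h θp| + h θp = 2 * h θp := by rw [abs_of_pos hθp]; ring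
    rw [this]
    positivity
  linarith
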